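/- arXiv:2009.06331 — 3 statements merged into one kernel-verified Lean document; each statement's English description precedes it below -/
import Mathlib

section
/- If a digraph D has a spanning subdigraph H that is strong and admits a partition of its vertex set V(H) = V_1 ∪ V_2 with V_1 ∩ V_2 = ∅ such that H[V_1] is strong and bipartite and V_2 is an independent set of vertices of H, then the proper connection number of D is at most 2. -/
/-!
Common definitions: digraphs as adjacency relations, directed walks and paths,
arc-colourings, proper connection and proper-walk connection numbers,
strong digraphs, bipartite digraphs, Hamiltonian cycles, chords,
circulant digraphs and strong 2-partitions.
-/

namespace PCDigraph

variable {V : Type*}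

/-- A directed walk from `u` to `v` in the digraph with adjacency relation `Adj`. -/
inductive DWalk (Adj : V → V → Prop) : V → V → Type _
  | nil {v : V} : DWalk Adj v v
  | cons {u v w : V} (h : Adj u v) (p : DWalk Adj v w) : DWalk Adj u w

namespace DWalk

variable {Adj : V → V → Prop}

/-- The list of arcs of a directed walk. -/
def arcs : ∀ {u v : V}, DWalk Adj u v → List (V × V)
  | _, _, .nil => []
  | u, _, .cons (v := w) _ p => (u, w) :: p.arcs

/-- The list of vertices visited by a directed walk. -/
def support : ∀ {u v : V}, DWalk Adj u v → List V
  | u, _, .nil => [u]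
  | u, _, .cons _ p => u :: p.support

/-- A directed walk is a (directed) path if it visits no vertex twice. -/
def IsPath {u v : V} (p : DWalk Adj u v) : Prop := p.support.Nodup

end DWalk

/-- A directed walk is properly coloured under the arc-colouring `c` if no two
consecutive arcs of the walk receive the same colour. -/
def ProperlyColoured {Adj : V → V → Prop} (c : V → V → ℕ) {u v : V}
    (p : DWalk Adj u v) : Prop :=
  (p.arcs.map fun e => c e.1 e.2).Chain' (· ≠ ·)

/-- `c` is an arc-colouring using colours in `{1, …, k}` that makes the digraph
properly connected: between every ordered pair of distinct vertices there is a
properly coloured directed path. -/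
def IsPCColouring (Adj : V → V → Prop) (k : ℕ) (c : V → V → ℕ) : Prop :=
  (∀ u v : V, Adj u v → c u v ∈ Finset.Icc 1 k) ∧
    ∀ u v : V, u ≠ v → ∃ p : DWalk Adj u v, p.IsPath ∧ ProperlyColoured c p

/-- `c` is an arc-colouring using colours in `{1, …, k}` that makes the digraph
properly-walk connected: between every ordered pair of distinct vertices there
is a properly coloured directed walk. -/
def IsWCColouring (Adj : V → V → Prop) (k : ℕ) (c : V → V → ℕ) : Prop :=
  (∀ u v : V, Adj u v → c u v ∈ Finset.Icc 1 k) ∧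
    ∀ u v : V, u ≠ v → ∃ p : DWalk Adj u v, ProperlyColoured c p

/-- The proper connection number of a digraph. -/
noncomputable def pc (Adj : V → V → Prop) : ℕ :=
  sInf {k : ℕ | ∃ c : V → V → ℕ, IsPCColouring Adj k c}

/-- The proper-walk connection number of a digraph. -/
noncomputable def wc (Adj : V → V → Prop) : ℕ :=
  sInf {k : ℕ | ∃ c : V → V → ℕ, IsWCColouring Adj k c}

/-- A digraph is strong if for every ordered pair of vertices there is a
directed path from the first to the second. -/
def Strong (Adj : V → V → Prop) : Prop :=
  ∀ u v : V, ∃ p : DWalk Adj u v, p.IsPath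

/-- A digraph is bipartite if its vertex set can be partitioned into two sets
such that every arc joins vertices from different sets. -/
def Bipartite (Adj : V → V → Prop) : Prop :=
  ∃ V₁ V₂ : Set V, V₁ ∪ V₂ = Set.univ ∧ Disjoint V₁ V₂ ∧
    ∀ u v : V, Adj u v → (u ∈ V₁ ∧ v ∈ V₂) ∨ (u ∈ V₂ ∧ v ∈ V₁)

/-- The out-degree of a vertex: the number of arcs with tail at that vertex. -/
noncomputable def outDeg (Adj : V → V → Prop) (v : V) : ℕ := {w | Adj v w}.ncard

/-- The in-degree of a vertex: the number of arcs with head at that vertex. -/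
noncomputable def inDeg (Adj : V → V → Prop) (v : V) : ℕ := {w | Adj w v}.ncard

/-- `x` enumerates a Hamiltonian cycle of the digraph: it is a bijective
enumeration of the vertices, consecutive vertices (cyclically) being joined
by an arc. -/
def IsHamCycle [Fintype V] (Adj : V → V → Prop)
    (x : ZMod (Fintype.card V) → V) : Prop :=
  Function.Bijective x ∧ ∀ i : ZMod (Fintype.card V), Adj (x i) (x (i + 1))

/-- A digraph is Hamiltonian if it has a Hamiltonian cycle. -/
def Hamiltonian [Fintype V] (Adj : V → V → Prop) : Prop :=
  ∃ x : ZMod (Fintype.card V) → V, IsHamCycle Adj x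

/-- For a Hamiltonian cycle enumerated by `x`, the arc `x p → x q` is a chord
if it is not an arc of the cycle, i.e. `q ≠ p + 1`. -/
def IsChord [Fintype V] (Adj : V → V → Prop)
    (x : ZMod (Fintype.card V) → V) (p q : ZMod (Fintype.card V)) : Prop :=
  Adj (x p) (x q) ∧ q ≠ p + 1

/-- The length of the chord from `x p` to `x q`: the length of the directed
path from `x p` to `x q` along the cycle. -/
def chordLength [Fintype V] (p q : ZMod (Fintype.card V)) : ℕ := (q - p).val

/-- The circulant digraph `C_n(S)`, with vertex set `ZMod n` and an arc from
`i` to `j` whenever `j - i ≡ s (mod n)` for some `s ∈ S`. -/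
def circulantAdj (n : ℕ) (S : Finset ℕ) : ZMod n → ZMod n → Prop :=
  fun i j => ∃ s ∈ S, j - i = (s : ZMod n)

/-- A strong 2-partition of a digraph: a partition of the vertex set into two
parts such that the spanning bipartite subdigraph induced by the arcs having
one end in each part is strong. -/
def HasStrongTwoPartition (Adj : V → V → Prop) : Prop :=
  ∃ V₁ V₂ : Set V, V₁ ∪ V₂ = Set.univ ∧ Disjoint V₁ V₂ ∧
    Strong (fun u v => Adj u v ∧ ((u ∈ V₁ ∧ v ∈ V₂) ∨ (u ∈ V₂ ∧ v ∈ V₁)))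

end PCDigraph

/-!
Let `κ` be a two-colouring of the bipartite digraph `H[V₁]`. Colour an arc with tail in `V₁` by
the side of its tail, and an arc from `V₂` into `V₁` by the side opposite to its head. Then at
every vertex of `V₁` each arc of `H` entering it differs in colour from each arc leaving it, so
every path of `H` whose interior lies in `V₁` is properly coloured. As `V₂` is independent and
`H` is strong, a vertex of `V₂` has an out-neighbour and an in-neighbour in `V₁`; joining these
through the strong digraph `H[V₁]` yields such a path between any two distinct vertices.
-/

namespace PCDigraph

variable {V W : Type*} {Adj : V → V → Prop}

namespace DWalk

def map {Adj' : W → W → Prop} (f : V → W) (hf : ∀ a b, Adj a b → Adj' (f a) (f b)) :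
    ∀ {u v : V}, DWalk Adj u v → DWalk Adj' (f u) (f v)
  | _, _, .nil => .nil
  | _, _, .cons h p => .cons (hf _ _ h) (p.map f hf)

section map

variable {Adj' : W → W → Prop} (f : V → W) (hf : ∀ a b, Adj a b → Adj' (f a) (f b))

@[simp] lemma arcs_map : ∀ {u v : V} (p : DWalk Adj u v),
    (p.map f hf).arcs = p.arcs.map fun e => (f e.1, f e.2)
  | _, _, .nil => rfl
  | _, _, .cons _ p => by simp [map, arcs, arcs_map p]

@[simp] lemma support_map : ∀ {u v : V} (p : DWalk Adj u v),
    (p.map f hf).support = p.support.map f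
  | _, _, .nil => rfl
  | _, _, .cons _ p => by simp [map, support, support_map p]

lemma IsPath.map (hinj : Function.Injective f) {u v : V} {p : DWalk Adj u v}
    (hp : p.IsPath) : (p.map f hf).IsPath := by
  unfold IsPath
  rw [support_map]
  exact List.Nodup.map hinj hp

end map

def snoc : ∀ {u v w : V}, DWalk Adj u v → Adj v w → DWalk Adj u w
  | _, _, _, .nil, h => .cons h .nil
  | _, _, _, .cons h' p, h => .cons h' (p.snoc h)

@[simp] lemma arcs_snoc : ∀ {u v w : V} (p : DWalk Adj u v) (h : Adj v w),
    (p.snoc h).arcs = p.arcs ++ [(v, w)]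
  | _, _, _, .nil, _ => rfl
  | _, _, _, .cons _ p, h => by simp [snoc, arcs, arcs_snoc p h]

@[simp] lemma support_snoc : ∀ {u v w : V} (p : DWalk Adj u v) (h : Adj v w),
    (p.snoc h).support = p.support ++ [w]
  | _, _, _, .nil, _ => rfl
  | _, _, _, .cons _ p, h => by simp [snoc, support, support_snoc p h]

lemma IsPath.cons {u v w : V} {h : Adj u v} {p : DWalk Adj v w} (hp : p.IsPath)
    (hu : u ∉ p.support) : (DWalk.cons h p).IsPath :=
  List.nodup_cons.2 ⟨hu, hp⟩

lemma IsPath.snoc {u v w : V} {p : DWalk Adj u v} (hp : p.IsPath) (h : Adj v w)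
    (hw : w ∉ p.support) : (p.snoc h).IsPath := by
  unfold IsPath
  rw [support_snoc]
  exact hp.append (List.nodup_singleton w) (by simpa using hw)

lemma exists_adj_start_of_ne {u v : V} (p : DWalk Adj u v) (h : u ≠ v) : ∃ w, Adj u w := by
  cases p with
  | nil => exact absurd rfl h
  | cons h' _ => exact ⟨_, h'⟩

lemma exists_adj_end_of_ne : ∀ {u v : V}, DWalk Adj u v → u ≠ v → ∃ w, Adj w v
  | _, _, .nil, h => absurd rfl h
  | u, v, .cons (v := x) h p, hne => by
    by_cases hxv : x = v
    · exact ⟨u, hxv ▸ h⟩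
    · exact exists_adj_end_of_ne p hxv

end DWalk

def ColourChangesAt (Adj : V → V → Prop) (c : V → V → ℕ) (x : V) : Prop :=
  ∀ u w, Adj u x → Adj x w → c u x ≠ c x w

section ProperlyColoured

variable {c : V → V → ℕ}

lemma properlyColoured_map_iff {Adj' : W → W → Prop} {c : W → W → ℕ} (f : V → W)
    (hf : ∀ a b, Adj a b → Adj' (f a) (f b)) {u v : V} (p : DWalk Adj u v) :
    ProperlyColoured c (p.map f hf) ↔ ProperlyColoured (fun a b => c (f a) (f b)) p := by
  unfold ProperlyColoured
  rw [DWalk.arcs_map, List.map_map]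
  rfl

lemma ProperlyColoured.cons {u v w : V} {h : Adj u v} {p : DWalk Adj v w}
    (hp : ProperlyColoured c p) (hv : ColourChangesAt Adj c v) :
    ProperlyColoured c (DWalk.cons h p) := by
  cases p with
  | nil => exact List.isChain_singleton _
  | cons h' _ => exact List.isChain_cons_cons.2 ⟨hv _ _ h h', hp⟩

lemma ProperlyColoured.snoc {v w : V} (h : Adj v w) (hv : ColourChangesAt Adj c v) :
    ∀ {u : V} {p : DWalk Adj u v}, ProperlyColoured c p → ProperlyColoured c (p.snoc h)
  | _, .nil, _ => List.isChain_singleton _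
  | _, .cons h' .nil, _ => List.isChain_cons_cons.2 ⟨hv _ _ h' h, List.isChain_singleton _⟩
  | _, .cons _ (.cons h' p), hp =>
    List.isChain_cons_cons.2 ⟨(List.isChain_cons_cons.1 hp).1,
      ProperlyColoured.snoc h hv (p := .cons h' p) (List.isChain_cons_cons.1 hp).2⟩

lemma properlyColoured_of_forall_mem_support :
    ∀ {u v : V} (p : DWalk Adj u v), (∀ x ∈ p.support, ColourChangesAt Adj c x) →
      ProperlyColoured c p
  | _, _, .nil, _ => List.isChain_nil
  | _, _, .cons _ p, h =>
    (properlyColoured_of_forall_mem_support p fun x hx => h x (List.mem_cons_of_mem _ hx)).cons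
      (h _ (by cases p <;> simp [DWalk.support]))

end ProperlyColoured

lemma Bipartite.exists_bool_of_induced {S : Set V} (h : Bipartite fun a b : S => Adj a b) :
    ∃ κ : V → Bool, ∀ u ∈ S, ∀ v ∈ S, Adj u v → κ u ≠ κ v := by
  classical
  obtain ⟨A, B, -, hdisj, hAB⟩ := h
  refine ⟨fun x => decide (∃ hx : x ∈ S, ⟨x, hx⟩ ∈ A), fun u hu v hv huv => ?_⟩
  rcases hAB ⟨u, hu⟩ ⟨v, hv⟩ huv with ⟨hA, hB⟩ | ⟨hB, hA⟩ <;>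
    simp [hu, hv, hA, Set.disjoint_right.1 hdisj hB]

open Classical in
noncomputable def switchColouring (S : Set V) (κ : V → Bool) (u v : V) : ℕ :=
  if u ∈ S then (if κ u then 1 else 2) else (if κ v then 2 else 1)

lemma switchColouring_mem_Icc (S : Set V) (κ : V → Bool) (u v : V) :
    switchColouring S κ u v ∈ Finset.Icc 1 2 := by
  unfold switchColouring
  split_ifs <;> simp

lemma colourChangesAt_switchColouring {S : Set V} {κ : V → Bool}
    (hκ : ∀ u ∈ S, ∀ v ∈ S, Adj u v → κ u ≠ κ v) {x : V} (hx : x ∈ S) :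
    ColourChangesAt Adj (switchColouring S κ) x := by
  intro u w hux _
  by_cases hu : u ∈ S
  · have := hκ u hu x hx hux
    cases hκu : κ u <;> cases hκx : κ x <;> simp_all [switchColouring]
  · cases hκx : κ x <;> simp [switchColouring, hu, hx, hκx]

section Paths

variable {H : V → V → Prop} {S : Set V} {c : V → V → ℕ}

lemma exists_properlyColoured_path_within (hc : ∀ x ∈ S, ColourChangesAt H c x)
    (hS : Strong fun a b : S => H a b) {a b : V} (ha : a ∈ S) (hb : b ∈ S) :
    ∃ p : DWalk H a b, p.IsPath ∧ ProperlyColoured c p ∧ ∀ x ∈ p.support, x ∈ S := by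
  obtain ⟨q, hq⟩ := hS ⟨a, ha⟩ ⟨b, hb⟩
  have hsupp : ∀ x ∈ (q.map Subtype.val fun _ _ h => h).support, x ∈ S := by
    simp only [DWalk.support_map, List.mem_map]
    rintro _ ⟨y, -, rfl⟩
    exact y.2
  exact ⟨_, hq.map _ _ Subtype.val_injective,
    properlyColoured_of_forall_mem_support _ fun x hx => hc x (hsupp x hx), hsupp⟩

lemma exists_properlyColoured_path_of_mem (hc : ∀ x ∈ S, ColourChangesAt H c x)
    (hS : Strong fun a b : S => H a b) (hmeet : ∀ u v, H u v → u ∈ S ∨ v ∈ S) (hH : Strong H)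
    {a : V} (ha : a ∈ S) (v : V) :
    ∃ p : DWalk H a v, p.IsPath ∧ ProperlyColoured c p ∧ ∀ x ∈ p.support, x ∈ S ∨ x = v := by
  by_cases hv : v ∈ S
  · obtain ⟨p, hp, hpc, hsupp⟩ := exists_properlyColoured_path_within hc hS ha hv
    exact ⟨p, hp, hpc, fun x hx => .inl (hsupp x hx)⟩
  obtain ⟨q, -⟩ := hH a v
  obtain ⟨b, hbv⟩ := q.exists_adj_end_of_ne (ne_of_mem_of_not_mem ha hv)
  have hb : b ∈ S := (hmeet b v hbv).resolve_right hv
  obtain ⟨p, hp, hpc, hsupp⟩ := exists_properlyColoured_path_within hc hS ha hb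
  refine ⟨p.snoc hbv, hp.snoc hbv fun h => hv (hsupp v h), hpc.snoc hbv (hc b hb), ?_⟩
  simp only [DWalk.support_snoc, List.mem_append, List.mem_singleton]
  exact fun x hx => hx.imp (hsupp x) id

lemma exists_properlyColoured_path (hc : ∀ x ∈ S, ColourChangesAt H c x)
    (hS : Strong fun a b : S => H a b) (hmeet : ∀ u v, H u v → u ∈ S ∨ v ∈ S) (hH : Strong H)
    {u v : V} (huv : u ≠ v) :
    ∃ p : DWalk H u v, p.IsPath ∧ ProperlyColoured c p := by
  by_cases hu : u ∈ S
  · obtain ⟨p, hp, hpc, -⟩ := exists_properlyColoured_path_of_mem hc hS hmeet hH hu v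
    exact ⟨p, hp, hpc⟩
  obtain ⟨q, -⟩ := hH u v
  obtain ⟨a, hua⟩ := q.exists_adj_start_of_ne huv
  have ha : a ∈ S := (hmeet u a hua).resolve_left hu
  obtain ⟨p, hp, hpc, hsupp⟩ := exists_properlyColoured_path_of_mem hc hS hmeet hH ha v
  exact ⟨.cons hua p, hp.cons fun h => (hsupp u h).elim hu huv, hpc.cons (hc a ha)⟩

end Paths

end PCDigraph

open PCDigraph

theorem pc_le_two_of_spanning_partition_general {V : Type*} (Adj : V → V → Prop)
    (hsub : ∃ AdjH : V → V → Prop,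
      (∀ u v : V, AdjH u v → Adj u v) ∧ Strong AdjH ∧
        ∃ V₁ V₂ : Set V, V₁ ∪ V₂ = Set.univ ∧ Disjoint V₁ V₂ ∧
          Strong (fun a b : V₁ => AdjH a.1 b.1) ∧
          Bipartite (fun a b : V₁ => AdjH a.1 b.1) ∧
          ∀ u ∈ V₂, ∀ v ∈ V₂, ¬ AdjH u v) :
    pc Adj ≤ 2 := by
  obtain ⟨H, hHD, hH, S, T, hST, -, hS, hbip, hT⟩ := hsub
  obtain ⟨κ, hκ⟩ := hbip.exists_bool_of_induced
  have hmeet : ∀ u v, H u v → u ∈ S ∨ v ∈ S := by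
    intro u v huv
    by_contra! h
    have hmemT : ∀ x, x ∉ S → x ∈ T := fun x hx => (hST ▸ Set.mem_univ x).resolve_left hx
    exact hT u (hmemT u h.1) v (hmemT v h.2) huv
  refine Nat.sInf_le ⟨switchColouring S κ, fun u v _ => switchColouring_mem_Icc S κ u v,
    fun u v huv => ?_⟩
  obtain ⟨p, hp, hpc⟩ := exists_properlyColoured_path
    (fun x hx => colourChangesAt_switchColouring hκ hx) hS hmeet hH huv
  exact ⟨p.map id hHD, hp.map id hHD Function.injective_id,
    (properlyColoured_map_iff id hHD p).2 hpc⟩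

/-- If a digraph `D` has a spanning subdigraph `H` that is strong and admits a
partition `V(H) = V₁ ∪ V₂`, with `V₁ ∩ V₂ = ∅`, such that `H[V₁]` is strong
and bipartite and `V₂` is an independent set of vertices of `H`, then the
proper connection number of `D` is at most `2`. -/
theorem pc_le_two_of_spanning_partition {V : Type*} (Adj : V → V → Prop)
    (hloopless : ∀ v : V, ¬ Adj v v)
    (hsub : ∃ AdjH : V → V → Prop,
      (∀ u v : V, AdjH u v → Adj u v) ∧ Strong AdjH ∧
        ∃ V₁ V₂ : Set V, V₁ ∪ V₂ = Set.univ ∧ Disjoint V₁ V₂ ∧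
          Strong (fun a b : V₁ => AdjH a.1 b.1) ∧
          Bipartite (fun a b : V₁ => AdjH a.1 b.1) ∧
          ∀ u ∈ V₂, ∀ v ∈ V₂, ¬ AdjH u v) :
    pc Adj ≤ 2 :=
  pc_le_two_of_spanning_partition_general Adj hsub
end

section
/- Let D be a Hamiltonian digraph of odd order and let C be a Hamiltonian cycle of D. If every vertex of D is the head of an even chord of C, then the proper connection number of D is at most 2. -/
open PCDigraph

/-!
Take a shortest even chord, of length `m`, and number the cycle so that this chord runs
from position `n - 1` to position `m - 1`. Since `n` is odd, an even chord joins positions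
of different parity exactly when it jumps backwards in this numbering, and so does every
cycle arc `t → t + 1` with `t < n - 1`. These arcs alone already form a strong digraph:
every position reaches `n - 1` along the cycle, hence `m - 1` and all later positions, and
a position `b < m - 1` is the head of an even chord which, by minimality of `m`, starts at
a later position. So the parity classes form a strong 2-partition, and colouring every arc
by the class of its tail makes every walk alternating between the classes properly coloured.
-/

open Relation

lemma Nat.reflTransGen_of_succ_of_back {R : ℕ → ℕ → Prop} {n k : ℕ}
    (hsucc : ∀ t, t + 1 < n → R t (t + 1)) (hback : R (n - 1) k)
    (hlow : ∀ b < k, ∃ T, b < T ∧ T < n ∧ R T b) {a b : ℕ} (ha : a < n) (hb : b < n) :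
    ReflTransGen R a b := by
  have forward : ∀ s t, s ≤ t → t < n → ReflTransGen R s t := fun s t hst ht =>
    reflTransGen_of_succ_of_le R (fun i hi => by simpa using hsucc i (by grind)) hst
  have high : ∀ b, k ≤ b → b < n → ReflTransGen R a b := fun b hkb hb =>
    ((forward a (n - 1) (by omega) (by omega)).tail hback).trans (forward k b hkb hb)
  suffices ∀ d b, k - b ≤ d → b < n → ReflTransGen R a b from this _ b le_rfl hb
  intro d
  induction d with
  | zero => exact fun b hd hb => high b (by omega) hb
  | succ d ih =>
    intro b hd hb
    by_cases hkb : k ≤ b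
    · exact high b hkb hb
    · obtain ⟨T, hbT, hT, hTb⟩ := hlow b (by omega)
      exact (ih T (by omega) hT).tail hTb

lemma ZMod.val_natCast_sub_natCast {n a b : ℕ} [NeZero n] (ha : a < n) (hb : b < n) :
    ((b : ZMod n) - a).val = if a ≤ b then b - a else b + n - a := by
  split_ifs with hab
  · rw [← Nat.cast_sub hab, ZMod.val_cast_of_lt (by omega)]
  · have : ((b + n - a : ℕ) : ZMod n) = b - a := by
      rw [Nat.cast_sub (by omega)]
      simp
    rw [← this, ZMod.val_cast_of_lt (by omega)]

namespace PCDigraph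

variable {V : Type*}

namespace DWalk

variable {R S : V → V → Prop}

def ofLE (hRS : ∀ u v, R u v → S u v) : ∀ {u v : V}, DWalk R u v → DWalk S u v
  | _, _, .nil => .nil
  | _, _, .cons h p => .cons (hRS _ _ h) (ofLE hRS p)

@[simp]
lemma arcs_ofLE (hRS : ∀ u v, R u v → S u v) :
    ∀ {u v : V} (p : DWalk R u v), (p.ofLE hRS).arcs = p.arcs
  | _, _, .nil => rfl
  | _, _, .cons _ p => by simp [ofLE, arcs, arcs_ofLE hRS p]

@[simp]
lemma support_ofLE (hRS : ∀ u v, R u v → S u v) :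
    ∀ {u v : V} (p : DWalk R u v), (p.ofLE hRS).support = p.support
  | _, _, .nil => rfl
  | _, _, .cons _ p => by simp [ofLE, support, support_ofLE hRS p]

lemma exists_support_suffix {u v w : V} (p : DWalk R v w) (hu : u ∈ p.support) :
    ∃ q : DWalk R u w, q.support <:+ p.support := by
  induction p with
  | nil =>
    obtain rfl : u = _ := by simpa [support] using hu
    exact ⟨.nil, List.suffix_refl _⟩
  | @cons v' _ _ h p ih =>
    by_cases huv : u = v'
    · subst huv
      exact ⟨.cons h p, List.suffix_refl _⟩
    · obtain ⟨q, hq⟩ := ih (by simpa [support, huv] using hu)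
      exact ⟨q, hq.trans (List.suffix_cons _ _)⟩

lemma exists_isPath_of_reflTransGen {u v : V} (h : ReflTransGen R u v) :
    ∃ p : DWalk R u v, p.IsPath := by
  classical
  induction h using ReflTransGen.head_induction_on with
  | refl => exact ⟨.nil, List.nodup_singleton _⟩
  | @head u w huw _ ih =>
    obtain ⟨p, hp⟩ := ih
    by_cases hu : u ∈ p.support
    · obtain ⟨q, hq⟩ := exists_support_suffix p hu
      exact ⟨q, hp.sublist hq.sublist⟩
    · exact ⟨.cons huw p, List.nodup_cons.mpr ⟨hu, hp⟩⟩

lemma fst_eq_of_mem_head?_arcs {u v : V} (p : DWalk R u v) {e : V × V}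
    (he : e ∈ p.arcs.head?) : e.1 = u := by
  cases p <;> simp only [arcs, List.head?_nil, List.head?_cons, Option.mem_def,
    reduceCtorEq, Option.some.injEq] at he
  rw [← he]

end DWalk

lemma properlyColoured_of_alternating {R : V → V → Prop} (P : V → Prop) [DecidablePred P]
    (hR : ∀ a b, R a b → (P a ↔ ¬ P b)) {u v : V} (p : DWalk R u v) :
    ProperlyColoured (fun a _ => if P a then 1 else 2) p := by
  induction p with
  | nil => exact List.isChain_nil
  | @cons u w _ h p ih =>
    refine List.isChain_cons.mpr ⟨?_, ih⟩
    intro y hy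
    rw [List.head?_map] at hy
    obtain ⟨e, he, rfl⟩ := Option.mem_map.mp hy
    rw [DWalk.fst_eq_of_mem_head?_arcs p he]
    have := hR _ _ h
    by_cases hw : P w <;> simp_all

variable {Adj : V → V → Prop}

lemma pc_le_two_of_hasStrongTwoPartition (h : HasStrongTwoPartition Adj) : pc Adj ≤ 2 := by
  classical
  obtain ⟨V₁, V₂, -, hdisj, hstrong⟩ := h
  have halt : ∀ a b, (Adj a b ∧ ((a ∈ V₁ ∧ b ∈ V₂) ∨ (a ∈ V₂ ∧ b ∈ V₁))) → (a ∈ V₁ ↔ b ∉ V₁) := by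
    rintro a b ⟨-, ⟨ha, hb⟩ | ⟨ha, hb⟩⟩
    · exact iff_of_true ha (Set.disjoint_right.mp hdisj hb)
    · exact iff_of_false (Set.disjoint_right.mp hdisj ha) (not_not.mpr hb)
  refine Nat.sInf_le ⟨fun a _ => if a ∈ V₁ then 1 else 2, fun a _ _ => ?_, fun u v _ => ?_⟩
  · dsimp only; split_ifs <;> simp
  · obtain ⟨p, hp⟩ := hstrong u v
    refine ⟨p.ofLE fun _ _ h => h.1, by simpa [DWalk.IsPath] using hp, ?_⟩
    simpa [ProperlyColoured] using properlyColoured_of_alternating (· ∈ V₁) halt p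

lemma hasStrongTwoPartition_of_reflTransGen (P : V → Prop)
    (h : ∀ u v, ReflTransGen (fun a b => Adj a b ∧ (P a ↔ ¬ P b)) u v) :
    HasStrongTwoPartition Adj := by
  refine ⟨{v | P v}, {v | ¬ P v}, Set.union_compl_self _, disjoint_compl_right, fun u v => ?_⟩
  obtain ⟨p, hp⟩ := DWalk.exists_isPath_of_reflTransGen (h u v)
  exact ⟨p.ofLE fun a b h => ⟨h.1, by by_cases P a <;> simp_all⟩,
    by simpa [DWalk.IsPath] using hp⟩

theorem hasStrongTwoPartition_of_shortest_evenChord {n : ℕ} [NeZero n] (hn : Odd n)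
    (z : ZMod n ≃ V) (hcyc : ∀ i, Adj (z i) (z (i + 1))) {m : ℕ} (hm : Even m) (hm0 : m ≠ 0)
    (hback : Adj (z (-1)) (z (m - 1 : ℕ)))
    (hhead : ∀ j, ∃ i, Adj (z i) (z j) ∧ Even (j - i).val ∧ m ≤ (j - i).val) :
    HasStrongTwoPartition Adj := by
  set P : V → Prop := fun v => Even (z.symm v).val
  have hP : ∀ t < n, P (z t) ↔ Even t := fun t ht => by simp [P, ZMod.val_cast_of_lt ht]
  have hm1 : m - 1 < n := by
    obtain ⟨i, -, -, hlen⟩ := hhead 0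
    have := ZMod.val_lt (0 - i)
    omega
  have hn2 := Nat.odd_iff.mp hn
  refine hasStrongTwoPartition_of_reflTransGen P fun u v => ?_
  have key := Nat.reflTransGen_of_succ_of_back
    (R := fun s t => Adj (z s) (z t) ∧ (P (z s) ↔ ¬ P (z t))) (n := n) (k := m - 1)
    ?succ ?back ?low (ZMod.val_lt (z.symm u)) (ZMod.val_lt (z.symm v))
  · simpa [Function.onFun] using ReflTransGen.lift (fun t : ℕ => z t)
      (p := fun a b => Adj a b ∧ (P a ↔ ¬ P b)) (fun _ _ h => h) _ _ key
  case succ =>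
    intro t ht
    refine ⟨by simpa using hcyc t, ?_⟩
    rw [hP t (by omega), hP (t + 1) ht, Nat.even_add_one, not_not]
  case back =>
    refine ⟨by simpa [Nat.cast_sub (NeZero.one_le : 1 ≤ n)] using hback, ?_⟩
    have := Nat.even_iff.mp hm
    rw [hP _ (by omega), hP _ hm1, Nat.even_iff, Nat.even_iff]
    omega
  case low =>
    intro b hb
    obtain ⟨i, hadj, hev, hlen⟩ := hhead b
    obtain ⟨T, hT, rfl⟩ : ∃ T < n, (T : ZMod n) = i := ⟨i.val, i.val_lt, i.natCast_zmod_val⟩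
    rw [ZMod.val_natCast_sub_natCast hT (by omega)] at hev hlen
    have hbT : b < T := by split_ifs at hlen <;> omega
    rw [if_neg (by omega), Nat.even_iff] at hev
    refine ⟨T, hbT, hT, hadj, ?_⟩
    rw [hP T hT, hP b (by omega), Nat.even_iff, Nat.even_iff]
    omega

end PCDigraph

/-- Let `D` be a Hamiltonian digraph of odd order and `C` be a Hamiltonian
cycle of `D`. If every vertex of `D` is the head of an even chord of `C`, then
the proper connection number of `D` is at most `2`. -/
theorem pc_le_two_of_even_chord_head {V : Type*} [Fintype V] (Adj : V → V → Prop)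
    (hloopless : ∀ v : V, ¬ Adj v v) (hodd : Odd (Fintype.card V))
    (x : ZMod (Fintype.card V) → V) (hC : IsHamCycle Adj x)
    (hchord : ∀ v : V, ∃ p q : ZMod (Fintype.card V),
      x q = v ∧ IsChord Adj x p q ∧ Even (chordLength (V := V) p q)) :
    pc Adj ≤ 2 := by
  have : NeZero (Fintype.card V) := ⟨hodd.pos.ne'⟩
  classical
  have hex : ∃ m, ∃ p q, Adj (x p) (x q) ∧ Even (chordLength (V := V) p q) ∧
      chordLength (V := V) p q = m := by
    obtain ⟨p, q, -, hpq, hev⟩ := hchord (x 0)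
    exact ⟨_, p, q, hpq.1, hev, rfl⟩
  obtain ⟨p₀, q₀, hadj₀, hev₀, hm⟩ := Nat.find_spec hex
  have hm0 : chordLength (V := V) p₀ q₀ ≠ 0 := by
    rw [chordLength, Ne, ZMod.val_eq_zero, sub_eq_zero]
    rintro rfl
    exact hloopless _ hadj₀
  set z : ZMod (Fintype.card V) ≃ V := (Equiv.addRight (p₀ + 1)).trans (Equiv.ofBijective x hC.1)
  have hz : ∀ i, z i = x (i + (p₀ + 1)) := fun _ => rfl
  refine pc_le_two_of_hasStrongTwoPartition (hasStrongTwoPartition_of_shortest_evenChord hodd z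
    (fun i => ?_) (hm ▸ hev₀) (hm ▸ hm0) ?_ fun j => ?_)
  · simpa [hz, add_right_comm] using hC.2 (i + (p₀ + 1))
  · rw [← hm, Nat.cast_sub (Nat.one_le_iff_ne_zero.mpr hm0), chordLength,
      ZMod.natCast_zmod_val, hz, hz]
    simpa using hadj₀
  · obtain ⟨p, q, hq, hpq, hev⟩ := hchord (z j)
    have hqj : q = j + (p₀ + 1) := hC.1.1 hq
    have hji : j - (p - (p₀ + 1)) = q - p := by rw [hqj]; ring
    refine ⟨p - (p₀ + 1), ?_, hji ▸ hev, hji ▸ Nat.find_min' hex ⟨p, q, hpq.1, hev, rfl⟩⟩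
    simpa [hz, hqj] using hpq.1
end

section
/- Let D be a Hamiltonian digraph and C a Hamiltonian cycle of D. If for every vertex v of D there is an even chord of C with tail v, then D has a strong 2-partition. -/
open PCDigraph

/-!
Colour each vertex by the parity of its position along the Hamiltonian cycle, counted from
the head of one cycle arc `m → m + 1`. Every other cycle arc joins the two colour classes, so the
bipartite subdigraph contains the Hamiltonian path from `m + 1` to `m`, and it is strong as soon as
it contains a walk from `m` to `m + 1`. For an even cycle the arc `m → m + 1` itself does. For an
odd cycle, an even chord that jumps over the cut arc changes position by `len - n`, which is odd,
so it joins the two classes, while a chord that does not jump over it can be replaced by a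
stretch of the path. It remains to choose `m` so that `m + 1` can be reached from `m` using the
chords and the cycle arcs other than `m → m + 1`: otherwise, taking `m` with the fewest vertices
reachable in this sense, everything reachable from `m - 1` is reachable from `m`, except `m`.
-/

open Relation

namespace ZMod

lemma val_neg_one_eq (n : ℕ) [NeZero n] : (-1 : ZMod n).val = n - 1 := by
  obtain ⟨k, rfl⟩ := Nat.exists_eq_succ_of_ne_zero (NeZero.ne n)
  simp

variable {n : ℕ} [NeZero n]

lemma val_add_one_of_ne_neg_one {a : ZMod n} (ha : a ≠ -1) : (a + 1).val = a.val + 1 := by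
  have hlt : a.val + 1 < n := by
    have hne : a.val ≠ n - 1 := fun h => ha (val_injective n (h.trans (val_neg_one_eq n).symm))
    have := a.val_lt
    omega
  have hone : (1 : ZMod n).val = 1 := val_one'' (by omega)
  rw [val_add_of_lt (by omega), hone]

end ZMod

namespace PCDigraph

section Walks

variable {V : Type*} {Adj : V → V → Prop}

lemma DWalk.exists_isPath_of_mem_support {a b u : V} (p : DWalk Adj a b) (hp : p.IsPath)
    (hu : u ∈ p.support) : ∃ q : DWalk Adj u b, q.IsPath := by
  induction p with
  | nil =>
    obtain rfl : u = _ := by simpa [DWalk.support] using hu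
    exact ⟨.nil, hp⟩
  | @cons c _ _ h p ih =>
    obtain ⟨-, hp'⟩ : c ∉ p.support ∧ p.IsPath := by
      simpa [DWalk.IsPath, DWalk.support] using hp
    obtain rfl | hu' : u = c ∨ u ∈ p.support := by simpa [DWalk.support] using hu
    · exact ⟨.cons h p, hp⟩
    · exact ih hp' hu'

lemma exists_isPath_of_reflTransGen {u v : V} (h : ReflTransGen Adj u v) :
    ∃ p : DWalk Adj u v, p.IsPath := by
  induction h using ReflTransGen.head_induction_on with
  | refl => exact ⟨.nil, by simp [DWalk.IsPath, DWalk.support]⟩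
  | @head a b hab _ ih =>
    obtain ⟨p, hp⟩ := ih
    by_cases ha : a ∈ p.support
    · exact p.exists_isPath_of_mem_support hp ha
    · exact ⟨.cons hab p, List.nodup_cons.mpr ⟨ha, hp⟩⟩

lemma strong_of_forall_reflTransGen (h : ∀ u v, ReflTransGen Adj u v) : Strong Adj :=
  fun u v => exists_isPath_of_reflTransGen (h u v)

def CrossingArc {α : Type*} (A : α → α → Prop) (P : α → Prop) (i j : α) : Prop :=
  A i j ∧ (P i ↔ ¬ P j)

lemma hasStrongTwoPartition_of_bijective {ι : Type*} {x : ι → V} (hx : x.Bijective)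
    (P : ι → Prop) (h : ∀ i j, ReflTransGen (CrossingArc (fun i j => Adj (x i) (x j)) P) i j) :
    HasStrongTwoPartition Adj := by
  set V₁ : Set V := {v | P (Function.surjInv hx.2 v)}
  have hV₁ : ∀ i, x i ∈ V₁ ↔ P i := fun i => by
    simp only [V₁, Set.mem_ofPred_eq, Function.leftInverse_surjInv hx i]
  refine ⟨V₁, V₁ᶜ, Set.union_compl_self _, disjoint_compl_right,
    strong_of_forall_reflTransGen fun u v => ?_⟩
  obtain ⟨i, rfl⟩ := hx.2 u
  obtain ⟨j, rfl⟩ := hx.2 v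
  refine ReflTransGen.lift x (fun i j ⟨hij, hP⟩ => ⟨hij, ?_⟩) i j (h i j)
  simp only [Set.mem_compl_iff, hV₁]
  tauto

end Walks

section CutCycle

variable {n : ℕ}

/-- The position of `i` on the cycle `0 → 1 → ⋯ → n - 1 → 0` cut open at the arc `m → m + 1`:
`m + 1` has position `0` and `m` has position `n - 1`. -/
def cutPos (m i : ZMod n) : ℕ := (i - (m + 1)).val

@[simp] lemma cutPos_add_one_self (m : ZMod n) : cutPos m (m + 1) = 0 := by
  simp [cutPos]

variable [NeZero n]

lemma cutPos_injective (m : ZMod n) : (cutPos m).Injective := fun _ _ h =>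
  sub_left_injective (ZMod.val_injective n h)

lemma cutPos_lt (m i : ZMod n) : cutPos m i < n := ZMod.val_lt _

@[simp] lemma cutPos_self (m : ZMod n) : cutPos m m = n - 1 := by
  simp [cutPos, ZMod.val_neg_one_eq]

lemma cutPos_add_one {m i : ZMod n} (hi : i ≠ m) : cutPos m (i + 1) = cutPos m i + 1 := by
  have hne : i - (m + 1) ≠ -1 := fun h => hi (by linear_combination h)
  rw [cutPos, show i + 1 - (m + 1) = i - (m + 1) + 1 by ring, ZMod.val_add_one_of_ne_neg_one hne,
    cutPos]

lemma reflTransGen_of_cutPos_le {R : ZMod n → ZMod n → Prop} {m : ZMod n}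
    (hR : ∀ i, i ≠ m → R i (i + 1)) {i j : ZMod n} (hij : cutPos m i ≤ cutPos m j) :
    ReflTransGen R i j := by
  obtain ⟨d, hd⟩ := Nat.exists_eq_add_of_le hij
  induction d generalizing j with
  | zero => rw [cutPos_injective m hd]
  | succ d ih =>
    obtain ⟨j, rfl⟩ : ∃ j', j = j' + 1 := ⟨j - 1, by ring⟩
    have hj : j ≠ m := by
      rintro rfl
      simp at hd
    rw [cutPos_add_one hj] at hd
    exact (ih (by omega) (by omega)).tail (hR j hj)

lemma reflTransGen_of_cut {R : ZMod n → ZMod n → Prop} {m : ZMod n}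
    (hR : ∀ i, i ≠ m → R i (i + 1)) (hm : ReflTransGen R m (m + 1)) (i j : ZMod n) :
    ReflTransGen R i j :=
  have hi : ReflTransGen R i m :=
    reflTransGen_of_cutPos_le hR (by have := cutPos_lt m i; simp; omega)
  (hi.trans hm).trans (reflTransGen_of_cutPos_le hR (by simp))

end CutCycle

section CutStep

variable {n : ℕ} (g : ZMod n → ZMod n)

def CutStep (m i j : ZMod n) : Prop := (i ≠ m ∧ j = i + 1) ∨ j = g i

variable [NeZero n] {g}

lemma reflTransGen_cutStep_of_sub_one {m v : ZMod n} (hg : g m ≠ m) (hm : m - 1 ≠ m)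
    (hcut : ¬ ReflTransGen (CutStep g (m - 1)) (m - 1) m)
    (h : ReflTransGen (CutStep g (m - 1)) (m - 1) v) : ReflTransGen (CutStep g m) m v := by
  induction h with
  | refl =>
    have hgm : cutPos m (g m) < n - 1 := lt_of_le_of_ne (by have := cutPos_lt m (g m); omega)
      (by rw [← cutPos_self m]; exact (cutPos_injective m).ne hg)
    have hpred : cutPos m (m - 1) + 1 = n - 1 := by
      rw [← cutPos_add_one hm, sub_add_cancel, cutPos_self]
    exact .head (Or.inr rfl) (reflTransGen_of_cutPos_le (fun i hi => Or.inl ⟨hi, rfl⟩) (by omega))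
  | @tail b c hb hbc ih =>
    have hbm : b ≠ m := fun h => hcut (h ▸ hb)
    refine ih.tail ?_
    rcases hbc with ⟨-, rfl⟩ | rfl
    · exact Or.inl ⟨hbm, rfl⟩
    · exact Or.inr rfl

lemma exists_reflTransGen_cutStep (hg : ∀ i, g i ≠ i) :
    ∃ m : ZMod n, ReflTransGen (CutStep g m) m (m + 1) := by
  classical
  by_contra! hcut
  have hone : (1 : ZMod n) ≠ 0 := fun h =>
    hg 0 ((subsingleton_iff_zero_eq_one.mp h.symm).elim _ _)
  let reach (m : ZMod n) : Finset (ZMod n) := {v | ReflTransGen (CutStep g m) m v}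
  obtain ⟨m, -, hmin⟩ := Finset.exists_min_image Finset.univ (fun m => (reach m).card)
    Finset.univ_nonempty
  have hcut' : ¬ ReflTransGen (CutStep g (m - 1)) (m - 1) m := by
    simpa using hcut (m - 1)
  have hsub : reach (m - 1) ⊆ (reach m).erase m := by
    intro v hv
    simp only [reach, Finset.mem_filter, Finset.mem_univ, true_and, Finset.mem_erase] at hv ⊢
    exact ⟨fun h => hcut' (h ▸ hv), reflTransGen_cutStep_of_sub_one (hg m)
      (by simpa using hone) hcut' hv⟩
  have hm : m ∈ reach m := by simp [reach, ReflTransGen.refl]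
  have hlt := Finset.card_lt_card (lt_of_le_of_lt hsub (Finset.erase_ssubset hm))
  exact absurd (hmin (m - 1) (Finset.mem_univ _)) (not_le.mpr hlt)

end CutStep

section Crossing

variable {n : ℕ} [NeZero n] {A : ZMod n → ZMod n → Prop} {g : ZMod n → ZMod n} {m : ZMod n}

lemma even_cutPos_add_one_iff {i : ZMod n} (hi : i ≠ m) :
    Even (cutPos m (i + 1)) ↔ ¬ Even (cutPos m i) := by
  rw [cutPos_add_one hi, Nat.even_add_one]

lemma even_cutPos_add_iff_of_lt (hn : Odd n) {d : ZMod n} (hd : Even d.val) {i : ZMod n}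
    (hlt : cutPos m (i + d) < cutPos m i) :
    Even (cutPos m (i + d)) ↔ ¬ Even (cutPos m i) := by
  have hpos : cutPos m (i + d) = ((i - (m + 1)) + d).val := by rw [cutPos]; ring_nf
  have hwrap : n ≤ cutPos m i + d.val := by
    by_contra! h
    rw [hpos, ZMod.val_add_of_lt h] at hlt
    exact absurd hlt (by simp [cutPos])
  -- the position drops by `n - d.val`, which is odd
  rw [hpos, ZMod.val_add_of_le hwrap]
  simp only [cutPos, Nat.even_iff] at hd hwrap ⊢
  obtain ⟨k, rfl⟩ := hn
  omega

lemma crossingArc_add_one (hcyc : ∀ i, A i (i + 1)) {i : ZMod n} (hi : i ≠ m) :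
    CrossingArc A (fun i => Even (cutPos m i)) i (i + 1) :=
  ⟨hcyc i, by simp only [even_cutPos_add_one_iff hi]; tauto⟩

lemma reflTransGen_crossingArc_of_cutStep (hn : Odd n) (hcyc : ∀ i, A i (i + 1))
    (hchord : ∀ i, A i (g i)) (heven : ∀ i, Even (g i - i).val) {v : ZMod n}
    (h : ReflTransGen (CutStep g m) m v) :
    ReflTransGen (CrossingArc A (fun i => Even (cutPos m i))) m v := by
  induction h with
  | refl => exact .refl
  | @tail b c _ hbc ih =>
    rcases hbc with ⟨hbm, rfl⟩ | rfl
    · exact ih.tail (crossingArc_add_one hcyc hbm)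
    refine ih.trans ?_
    by_cases hle : cutPos m b ≤ cutPos m (g b)
    · exact reflTransGen_of_cutPos_le (fun i hi => crossingArc_add_one hcyc hi) hle
    · have hgb : b + (g b - b) = g b := add_sub_cancel b (g b)
      have hflip := even_cutPos_add_iff_of_lt hn (heven b) (m := m) (i := b) (by rw [hgb]; omega)
      rw [hgb] at hflip
      exact .single ⟨hchord b, by simp only [hflip]; tauto⟩

lemma reflTransGen_crossingArc (hcyc : ∀ i, A i (i + 1)) (hchord : ∀ i, A i (g i))
    (heven : ∀ i, Even (g i - i).val) (hm : ReflTransGen (CutStep g m) m (m + 1)) (i j : ZMod n) :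
    ReflTransGen (CrossingArc A (fun i => Even (cutPos m i))) i j := by
  refine reflTransGen_of_cut (fun i hi => crossingArc_add_one hcyc hi) ?_ i j
  rcases Nat.even_or_odd n with hn | hn
  · refine .single ⟨hcyc m, ?_⟩
    have := NeZero.ne n
    simp only [cutPos_self, cutPos_add_one_self, Even.zero, not_true_eq_false, iff_false]
    exact Nat.not_even_iff_odd.mpr (Nat.Even.sub_odd (by omega) hn odd_one)
  · exact reflTransGen_crossingArc_of_cutStep hn hcyc hchord heven hm

end Crossing

end PCDigraph

/-- Let `D` be a Hamiltonian digraph and `C` a Hamiltonian cycle of `D`.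
If for every vertex `v` of `D` there is an even chord of `C` with tail `v`,
then `D` has a strong 2-partition. -/
theorem strongTwoPartition_of_even_chord_tail {V : Type*} [Fintype V]
    (Adj : V → V → Prop) (hloopless : ∀ v : V, ¬ Adj v v)
    (x : ZMod (Fintype.card V) → V) (hC : IsHamCycle Adj x)
    (hchord : ∀ v : V, ∃ p q : ZMod (Fintype.card V),
      x p = v ∧ IsChord Adj x p q ∧ Even (chordLength (V := V) p q)) :
    HasStrongTwoPartition Adj := by
  have : NeZero (Fintype.card V) := ⟨fun h => (Fintype.card_eq_zero_iff.mp h).elim (x 0)⟩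
  choose p q hxp hq hq_even using fun i => hchord (x i)
  obtain rfl : p = id := funext fun i => hC.1.injective (hxp i)
  have hq_adj (i) : Adj (x i) (x (q i)) := (hq i).1
  have hq_ne (i) : q i ≠ i := fun h => hloopless _ (h ▸ hq_adj i)
  obtain ⟨m, hm⟩ := exists_reflTransGen_cutStep hq_ne
  exact hasStrongTwoPartition_of_bijective hC.1 _
    (reflTransGen_crossingArc hC.2 hq_adj hq_even hm)
end
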